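/- Let A, P ∈ R^{n×n} be symmetric matrices, and suppose P = V R V^T where V ∈ R^{n×d} has orthonormal columns and R ∈ R^{d×d} is symmetric and invertible. Let V̂ ∈ R^{n×d} consist of orthonormal eigenvectors of A associated with its d largest-magnitude eigenvalues, and let Π̂ = V̂V̂^T, Π = VV^T. Then (Davis–Kahan) ‖Π̂ − Π‖_F ≤ 2^{3/2} √d ‖A − P‖ / |λ_min(R)|, provided ‖A − P‖ < |λ_min(R)|/2, where λ_min(R) is the eigenvalue of R of smallest magnitude. -/

import Mathlib

/-!
Let `Vp` collect the eigenvectors of `A` that are not in `V̂`. Since `V̂V̂ᵀ + VpVpᵀ = 1`,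
`‖V̂V̂ᵀ - VVᵀ‖_F = √2 ‖Vpᵀ V‖_F`, so it suffices to bound the sine matrix `Vpᵀ V`.
Multiplying `A - P` by `Vpᵀ` on the left and by `V U` on the right, where `R U = U Λ` is the
spectral decomposition of `R`, gives the Sylvester identity
`Vpᵀ (A - P) V U = diag ν T - T Λ` with `T = Vpᵀ V U`; its left side has Frobenius norm at most
`‖A - P‖ √d`, and each entry of its right side is `T j i (ν j - λ i)`.
The eigenvalues `ν j` are at most `‖A - P‖ < λ_min / 2` in absolute value (a Weyl-type bound:
`P` has rank at most `d`, while `A` has `d + 1` orthonormal eigenvectors whose eigenvalues are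
at least `|ν j|` in absolute value), so `|ν j - λ i| ≥ λ_min / 2` and
`‖T‖_F ≤ 2 √d ‖A - P‖ / λ_min`.
-/

open Matrix

/-- Frobenius norm of a real matrix. -/
noncomputable def frob {m n : Type*} [Fintype m] [Fintype n] (M : Matrix m n ℝ) : ℝ :=
  Real.sqrt (∑ i, ∑ j, (M i j) ^ 2)

/-- Spectral (ℓ₂ operator) norm of a real matrix. -/
noncomputable def specNorm {m n : Type*} [Fintype m] [Fintype n] [DecidableEq n]
    (M : Matrix m n ℝ) : ℝ :=
  ‖LinearMap.toContinuousLinearMap (Matrix.toEuclideanLin M)‖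

section Norms

variable {m n k l : Type*}

lemma transpose_mul_apply [Fintype n] (M : Matrix m n ℝ) (N : Matrix n k ℝ) (j : k) :
    (M * N)ᵀ j = M *ᵥ Nᵀ j := by
  rw [transpose_mul, mul_apply_eq_vecMul, vecMul_transpose]

variable [Fintype m] [Fintype n] [Fintype k] [Fintype l]

lemma specNorm_nonneg [DecidableEq n] (M : Matrix m n ℝ) : 0 ≤ specNorm M := norm_nonneg _

lemma EuclideanSpace.norm_sq_eq_dotProduct (y : EuclideanSpace ℝ n) :
    ‖y‖ ^ 2 = y.ofLp ⬝ᵥ y.ofLp := by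
  rw [← real_inner_self_eq_norm_sq, EuclideanSpace.inner_eq_star_dotProduct, star_trivial]

lemma mulVec_dotProduct_mulVec_le [DecidableEq n] (M : Matrix m n ℝ) (x : n → ℝ) :
    M *ᵥ x ⬝ᵥ M *ᵥ x ≤ specNorm M ^ 2 * (x ⬝ᵥ x) := by
  have key : ‖(WithLp.toLp 2 (M *ᵥ x) : EuclideanSpace ℝ m)‖ ≤
      specNorm M * ‖(WithLp.toLp 2 x : EuclideanSpace ℝ n)‖ :=
    (LinearMap.toContinuousLinearMap (toEuclideanLin M)).le_opNorm (WithLp.toLp 2 x)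
  have := pow_le_pow_left₀ (norm_nonneg _) key 2
  rwa [mul_pow, EuclideanSpace.norm_sq_eq_dotProduct,
    EuclideanSpace.norm_sq_eq_dotProduct] at this

lemma mulVec_dotProduct_mulVec_of_orthonormal [DecidableEq k] {B : Matrix n k ℝ}
    (hB : Bᵀ * B = 1) (c : k → ℝ) : B *ᵥ c ⬝ᵥ B *ᵥ c = c ⬝ᵥ c := by
  rw [dotProduct_mulVec, ← mulVec_transpose, mulVec_mulVec, hB, one_mulVec]

lemma transpose_mulVec_dotProduct_le [DecidableEq k] {Q : Matrix n k ℝ} (hQ : Qᵀ * Q = 1)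
    (y : n → ℝ) : Qᵀ *ᵥ y ⬝ᵥ Qᵀ *ᵥ y ≤ y ⬝ᵥ y := by
  set w := Qᵀ *ᵥ y
  have hyw : y ⬝ᵥ Q *ᵥ w = w ⬝ᵥ w := by
    rw [dotProduct_mulVec, ← mulVec_transpose]
  have hres : (y - Q *ᵥ w) ⬝ᵥ (y - Q *ᵥ w) = y ⬝ᵥ y - w ⬝ᵥ w := by
    rw [sub_dotProduct, dotProduct_sub, dotProduct_sub, dotProduct_comm (Q *ᵥ w) y, hyw,
      mulVec_dotProduct_mulVec_of_orthonormal hQ]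
    ring
  have := dotProduct_star_self_nonneg (y - Q *ᵥ w)
  rw [star_trivial, hres] at this
  linarith

lemma frob_nonneg (M : Matrix m n ℝ) : 0 ≤ frob M := Real.sqrt_nonneg _

lemma frob_le_iff {M : Matrix m n ℝ} {c : ℝ} (hc : 0 ≤ c) : frob M ≤ c ↔ frob M ^ 2 ≤ c ^ 2 :=
  (pow_le_pow_iff_left₀ (frob_nonneg M) hc two_ne_zero).symm

lemma frob_sq_eq_sum_dotProduct (M : Matrix m n ℝ) : frob M ^ 2 = ∑ j, Mᵀ j ⬝ᵥ Mᵀ j := by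
  rw [frob, Real.sq_sqrt (by positivity), Finset.sum_comm]
  simp [dotProduct, sq]

lemma frob_sq_eq_trace (M : Matrix m n ℝ) : frob M ^ 2 = trace (Mᵀ * M) := by
  rw [frob_sq_eq_sum_dotProduct]
  simp [trace, mul_apply, dotProduct]

lemma frob_mul_le [DecidableEq n] (M : Matrix m n ℝ) (N : Matrix n k ℝ) :
    frob (M * N) ≤ specNorm M * frob N := by
  rw [frob_le_iff (mul_nonneg (specNorm_nonneg M) (frob_nonneg N)), mul_pow,
    frob_sq_eq_sum_dotProduct, frob_sq_eq_sum_dotProduct, Finset.mul_sum]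
  refine Finset.sum_le_sum fun j _ => ?_
  rw [transpose_mul_apply]
  exact mulVec_dotProduct_mulVec_le M (Nᵀ j)

lemma frob_transpose_mul_le [DecidableEq k] {Q : Matrix n k ℝ} (hQ : Qᵀ * Q = 1)
    (X : Matrix n l ℝ) : frob (Qᵀ * X) ≤ frob X := by
  rw [frob_le_iff (frob_nonneg X), frob_sq_eq_sum_dotProduct, frob_sq_eq_sum_dotProduct]
  refine Finset.sum_le_sum fun j _ => ?_
  rw [transpose_mul_apply]
  exact transpose_mulVec_dotProduct_le hQ (Xᵀ j)

lemma frob_of_orthonormal [DecidableEq k] {B : Matrix n k ℝ} (hB : Bᵀ * B = 1) :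
    frob B = √(Fintype.card k) := by
  rw [← Real.sqrt_sq (frob_nonneg B), frob_sq_eq_trace, hB, trace_one]

lemma frob_mul_orthogonal [DecidableEq k] {U : Matrix k k ℝ} (hU : U * Uᵀ = 1)
    (S : Matrix m k ℝ) : frob (S * U) = frob S := by
  rw [← Real.sqrt_sq (frob_nonneg (S * U)), frob_sq_eq_trace, transpose_mul, trace_mul_cycle',
    ← Matrix.mul_assoc, ← Matrix.mul_assoc, hU, Matrix.one_mul, ← frob_sq_eq_trace,
    Real.sqrt_sq (frob_nonneg S)]

lemma mul_frob_le_frob_diagonal_mul_sub_mul_diagonal [DecidableEq m] [DecidableEq n] {g : ℝ}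
    (hg : 0 ≤ g) (a : n → ℝ) (b : m → ℝ) (hab : ∀ i j, g ≤ |b i - a j|) (T : Matrix m n ℝ) :
    g * frob T ≤ frob (diagonal b * T - T * diagonal a) := by
  have hentry (i j) : (g * T i j) ^ 2 ≤ (diagonal b * T - T * diagonal a) i j ^ 2 := by
    rw [Matrix.sub_apply, diagonal_mul, mul_diagonal, mul_comm (T i j) (a j), ← sub_mul,
      mul_pow, mul_pow, ← sq_abs (b i - a j)]
    gcongr
    exact hab i j
  calc g * frob T = √(∑ i, ∑ j, (g * T i j) ^ 2) := by
        simp only [frob, mul_pow, ← Finset.mul_sum]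
        rw [Real.sqrt_mul (sq_nonneg g), Real.sqrt_sq hg]
    _ ≤ frob (diagonal b * T - T * diagonal a) :=
        Real.sqrt_le_sqrt (Finset.sum_le_sum fun i _ => Finset.sum_le_sum fun j _ => hentry i j)

lemma frob_sub_projections [DecidableEq k] [DecidableEq n] {W V : Matrix n k ℝ}
    {Vp : Matrix n l ℝ} (hW : Wᵀ * W = 1) (hV : Vᵀ * V = 1)
    (hcompl : W * Wᵀ + Vp * Vpᵀ = 1) :
    frob (W * Wᵀ - V * Vᵀ) = √2 * frob (Vpᵀ * V) := by
  set G := W * Wᵀ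
  set H := V * Vᵀ
  have hGG : G * G = G := by
    rw [Matrix.mul_assoc, ← Matrix.mul_assoc Wᵀ, hW, Matrix.one_mul]
  have hHH : H * H = H := by
    rw [Matrix.mul_assoc, ← Matrix.mul_assoc Vᵀ, hV, Matrix.one_mul]
  have htrG : trace G = Fintype.card k := by rw [trace_mul_comm, hW, trace_one]
  have htrH : trace H = Fintype.card k := by rw [trace_mul_comm, hV, trace_one]
  have htrGH : trace (G * H) = Fintype.card k - frob (Vpᵀ * V) ^ 2 := by
    have hcross : trace (Vp * Vpᵀ * H) = frob (Vpᵀ * V) ^ 2 := by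
      rw [frob_sq_eq_trace, transpose_mul, transpose_transpose]
      simp only [H, ← Matrix.mul_assoc]
      rw [trace_mul_comm]
      simp only [Matrix.mul_assoc]
    rw [show G = 1 - Vp * Vpᵀ by rw [← hcompl, add_sub_cancel_right], Matrix.sub_mul,
      Matrix.one_mul, trace_sub, htrH, hcross]
  have hsq : frob (G - H) ^ 2 = 2 * frob (Vpᵀ * V) ^ 2 := by
    rw [frob_sq_eq_trace, transpose_sub, transpose_mul, transpose_mul, transpose_transpose,
      transpose_transpose, Matrix.sub_mul, Matrix.mul_sub, Matrix.mul_sub, hGG, hHH,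
      trace_sub, trace_sub, trace_sub, trace_mul_comm H G, htrG, htrH, htrGH]
    ring
  rw [← Real.sqrt_sq (frob_nonneg (G - H)), hsq, Real.sqrt_mul zero_le_two,
    Real.sqrt_sq (frob_nonneg _)]

end Norms

section Eigenvectors

variable {m n k l : Type*} [Fintype n]

lemma exists_mulVec_eq_zero_of_card_lt [Fintype m] [Fintype k] (M : Matrix m k ℝ)
    (h : Fintype.card m < Fintype.card k) : ∃ c ≠ 0, M *ᵥ c = 0 := by
  have hker : LinearMap.ker M.mulVecLin ≠ ⊥ :=
    LinearMap.ker_ne_bot_of_finrank_lt (by simpa only [Module.finrank_fintype_fun_eq_card])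
  obtain ⟨c, hc, hc0⟩ := (Submodule.ne_bot_iff _).mp hker
  exact ⟨c, hc0, hc⟩

/-- `V R Vᵀ` has rank at most `card m`, so some nonzero combination of `card m + 1`
orthonormal eigenvectors of `A` is annihilated by it. -/
lemma abs_le_specNorm_sub_of_eigenvectors [Fintype m] [Fintype k] [DecidableEq n]
    [DecidableEq k] {A : Matrix n n ℝ} {B : Matrix n k ℝ} {w : k → ℝ} (hB : Bᵀ * B = 1)
    (hAB : A * B = B * diagonal w) (V : Matrix n m ℝ) (R : Matrix m m ℝ)
    (hmk : Fintype.card m < Fintype.card k) {t : ℝ} (ht : ∀ i, |t| ≤ |w i|) :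
    |t| ≤ specNorm (A - V * R * Vᵀ) := by
  obtain ⟨c, hc0, hc⟩ := exists_mulVec_eq_zero_of_card_lt (Vᵀ * B) hmk
  have hPB : (V * R * Vᵀ) *ᵥ (B *ᵥ c) = 0 := by
    rw [← mulVec_mulVec, mulVec_mulVec c Vᵀ B, hc, mulVec_zero]
  have hAB' : A *ᵥ (B *ᵥ c) = B *ᵥ (w * c) := by
    rw [mulVec_mulVec, hAB, ← mulVec_mulVec]
    congr 1
    ext i
    exact mulVec_diagonal w c i
  have hlow : t ^ 2 * (c ⬝ᵥ c) ≤ (w * c) ⬝ᵥ (w * c) := by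
    simp only [dotProduct, Finset.mul_sum, Pi.mul_apply]
    refine Finset.sum_le_sum fun i _ => ?_
    have := mul_le_mul_of_nonneg_right (sq_le_sq.mpr (ht i)) (mul_self_nonneg (c i))
    linarith
  have hup : (w * c) ⬝ᵥ (w * c) ≤ specNorm (A - V * R * Vᵀ) ^ 2 * (c ⬝ᵥ c) := by
    have := mulVec_dotProduct_mulVec_le (A - V * R * Vᵀ) (B *ᵥ c)
    rwa [sub_mulVec, hPB, sub_zero, hAB', mulVec_dotProduct_mulVec_of_orthonormal hB,
      mulVec_dotProduct_mulVec_of_orthonormal hB] at this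
  have hcpos : 0 < c ⬝ᵥ c := by
    simpa only [star_trivial] using dotProduct_star_self_pos_iff.mpr hc0
  exact abs_le_of_sq_le_sq (le_of_mul_le_mul_right (hlow.trans hup) hcpos) (specNorm_nonneg _)

lemma submatrix_transpose_mul_self_of_orthonormal [DecidableEq k] [DecidableEq l]
    {B : Matrix n k ℝ} (hB : Bᵀ * B = 1) {f : l → k} (hf : Function.Injective f) :
    (B.submatrix id f)ᵀ * B.submatrix id f = 1 := by
  rw [transpose_submatrix, ← submatrix_mul _ _ f id f Function.bijective_id, hB,
    submatrix_one f hf]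

lemma mul_submatrix_of_mul_eq_mul_diagonal [Fintype k] [Fintype l] [DecidableEq k]
    [DecidableEq l] {A : Matrix n n ℝ} {B : Matrix n k ℝ} {w : k → ℝ}
    (hAB : A * B = B * diagonal w) (f : l → k) :
    A * B.submatrix id f = B.submatrix id f * diagonal (w ∘ f) := by
  ext i j
  rw [mul_diagonal, submatrix_apply, Function.comp_apply, ← mul_diagonal, ← hAB]
  rfl

lemma fromCols_transpose_mul_self [DecidableEq k] [DecidableEq l] {W : Matrix n k ℝ}
    {W' : Matrix n l ℝ} (hW : Wᵀ * W = 1) (hW' : W'ᵀ * W' = 1) (hWW' : Wᵀ * W' = 0) :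
    (fromCols W W')ᵀ * fromCols W W' = 1 := by
  have hW'W : W'ᵀ * W = 0 := by
    rw [← transpose_transpose W, ← transpose_mul, hWW', transpose_zero]
  rw [transpose_fromCols, fromRows_mul_fromCols, hW, hW', hWW', hW'W, fromBlocks_one]

lemma mul_fromCols_of_mul_eq_mul_diagonal [Fintype k] [Fintype l] [DecidableEq k]
    [DecidableEq l] {A : Matrix n n ℝ} {W : Matrix n k ℝ} {W' : Matrix n l ℝ} {μ : k → ℝ}
    {ν : l → ℝ} (hμ : A * W = W * diagonal μ) (hν : A * W' = W' * diagonal ν) :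
    A * fromCols W W' = fromCols W W' * diagonal (Sum.elim μ ν) := by
  rw [mul_fromCols, ← fromBlocks_diagonal, fromCols_mul_fromBlocks, hμ, hν]
  simp only [Matrix.mul_zero, add_zero, zero_add]

lemma mul_transpose_add_mul_transpose_eq_one [Fintype k] [Fintype l] [DecidableEq n]
    [DecidableEq k] [DecidableEq l] (e : n ≃ k ⊕ l) {W : Matrix n k ℝ} {W' : Matrix n l ℝ}
    (h : (fromCols W W')ᵀ * fromCols W W' = 1) : W * Wᵀ + W' * W'ᵀ = 1 := by
  rw [transpose_fromCols, ← fromCols_mul_fromRows_eq_one_comm e] at h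
  rwa [fromCols_mul_fromRows] at h

lemma Matrix.IsHermitian.exists_orthogonal_diagonalization [Fintype m] [DecidableEq m]
    {R : Matrix m m ℝ} (hR : R.IsHermitian) :
    ∃ U : Matrix m m ℝ, U * Uᵀ = 1 ∧ Uᵀ * U = 1 ∧ R * U = U * diagonal hR.eigenvalues := by
  set U : Matrix m m ℝ := (hR.eigenvectorUnitary : Matrix m m ℝ)
  have hUt : star U = Uᵀ := conjTranspose_eq_transpose_of_trivial U
  have hUtU : Uᵀ * U = 1 := hUt ▸ Unitary.star_mul_self_of_mem hR.eigenvectorUnitary.2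
  have hUUt : U * Uᵀ = 1 := hUt ▸ Unitary.mul_star_self_of_mem hR.eigenvectorUnitary.2
  refine ⟨U, hUUt, hUtU, ?_⟩
  conv_lhs => rw [hR.spectral_theorem, Unitary.conjStarAlgAut_apply]
  rw [hUt, Matrix.mul_assoc, hUtU, Matrix.mul_one]
  rfl

end Eigenvectors

section DavisKahan

variable {n k l : Type*} [Fintype n] [Fintype k] [Fintype l]
  [DecidableEq n] [DecidableEq k] [DecidableEq l]

lemma abs_le_specNorm_sub_of_dominated {A : Matrix n n ℝ} {W : Matrix n k ℝ}
    {W' : Matrix n l ℝ} {μ : k → ℝ} {ν : l → ℝ}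
    (hF : (fromCols W W')ᵀ * fromCols W W' = 1)
    (hμ : A * W = W * diagonal μ) (hν : A * W' = W' * diagonal ν)
    (V : Matrix n k ℝ) (R : Matrix k k ℝ) (j : l) (hdom : ∀ i, |ν j| ≤ |μ i|) :
    |ν j| ≤ specNorm (A - V * R * Vᵀ) := by
  have hf : Function.Injective (Sum.map (id : k → k) fun _ : Unit => j) :=
    Function.injective_id.sumMap fun _ _ _ => rfl
  refine abs_le_specNorm_sub_of_eigenvectors (submatrix_transpose_mul_self_of_orthonormal hF hf)
    (mul_submatrix_of_mul_eq_mul_diagonal (mul_fromCols_of_mul_eq_mul_diagonal hμ hν) _)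
    V R (by simp) ?_
  rintro (i | _)
  exacts [hdom i, le_rfl]

theorem davisKahan_sinTheta {A : Matrix n n ℝ} (hA : A.IsSymm) {V : Matrix n k ℝ}
    (hV : Vᵀ * V = 1) {R : Matrix k k ℝ} (hR : R.IsHermitian) {Vp : Matrix n l ℝ}
    (hVp : Vpᵀ * Vp = 1) {ν : l → ℝ} (hν : A * Vp = Vp * diagonal ν) {g : ℝ} (hg : 0 ≤ g)
    (hgap : ∀ j i, g ≤ |ν j - hR.eigenvalues i|) :
    g * frob (Vpᵀ * V) ≤ specNorm (A - V * R * Vᵀ) * √(Fintype.card k) := by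
  obtain ⟨U, hUUt, hUtU, hRU⟩ := hR.exists_orthogonal_diagonalization
  set T := Vpᵀ * V * U
  have hsinTheta : Vpᵀ * (A - V * R * Vᵀ) * (V * U) =
      diagonal ν * T - T * diagonal hR.eigenvalues := by
    have hVpA : Vpᵀ * A = diagonal ν * Vpᵀ := by
      rw [← hA.eq, ← transpose_mul, hν, transpose_mul, diagonal_transpose]
    rw [Matrix.mul_sub, Matrix.sub_mul, hVpA]
    simp only [T, Matrix.mul_assoc]
    rw [← Matrix.mul_assoc Vᵀ V, hV, Matrix.one_mul, hRU]
  have hVU : (V * U)ᵀ * (V * U) = 1 := by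
    rw [transpose_mul, Matrix.mul_assoc, ← Matrix.mul_assoc Vᵀ, hV, Matrix.one_mul, hUtU]
  calc g * frob (Vpᵀ * V) = g * frob T := by rw [frob_mul_orthogonal hUUt]
    _ ≤ frob (Vpᵀ * (A - V * R * Vᵀ) * (V * U)) := by
        rw [hsinTheta]
        exact mul_frob_le_frob_diagonal_mul_sub_mul_diagonal hg _ _ hgap T
    _ ≤ frob ((A - V * R * Vᵀ) * (V * U)) := by
        rw [Matrix.mul_assoc]
        exact frob_transpose_mul_le hVp _
    _ ≤ specNorm (A - V * R * Vᵀ) * frob (V * U) := frob_mul_le _ _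
    _ = specNorm (A - V * R * Vᵀ) * √(Fintype.card k) := by rw [frob_of_orthonormal hVU]

end DavisKahan

lemma two_rpow_three_halves : (2 : ℝ) ^ ((3 : ℝ) / 2) = 2 * √2 := by
  rw [show (3 : ℝ) / 2 = 1 + 1 / 2 by norm_num, Real.rpow_add two_pos, Real.rpow_one,
    Real.sqrt_eq_rpow]

theorem stmt18_general {n d p : ℕ} (hdp : d + p = n)
    (A P : Matrix (Fin n) (Fin n) ℝ) (hA : A.IsSymm)
    (V : Matrix (Fin n) (Fin d) ℝ) (hV : Vᵀ * V = 1)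
    (R : Matrix (Fin d) (Fin d) ℝ) (hR : R.IsHermitian)
    (hP : P = V * R * Vᵀ)
    (Vhat : Matrix (Fin n) (Fin d) ℝ) (hVhat : Vhatᵀ * Vhat = 1)
    (μ : Fin d → ℝ) (hμ : A * Vhat = Vhat * Matrix.diagonal μ)
    (Vp : Matrix (Fin n) (Fin p) ℝ) (hVp : Vpᵀ * Vp = 1) (hperp : Vhatᵀ * Vp = 0)
    (ν : Fin p → ℝ) (hν : A * Vp = Vp * Matrix.diagonal ν)
    (htop : ∀ k j, |ν j| ≤ |μ k|)
    (hgap : specNorm (A - P) < (⨅ i, |hR.eigenvalues i|) / 2) :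
    frob (Vhat * Vhatᵀ - V * Vᵀ)
      ≤ 2 ^ ((3 : ℝ) / 2) * Real.sqrt d * specNorm (A - P) / ⨅ i, |hR.eigenvalues i| := by
  subst hP
  set lam := ⨅ i, |hR.eigenvalues i|
  set ε := specNorm (A - V * R * Vᵀ)
  have hlam : 0 < lam := by linarith [specNorm_nonneg (A - V * R * Vᵀ)]
  have hF := fromCols_transpose_mul_self hVhat hVp hperp
  have hsep (j : Fin p) (i : Fin d) : lam / 2 ≤ |ν j - hR.eigenvalues i| := by
    have hlam_le : lam ≤ |hR.eigenvalues i| := ciInf_le (Finite.bddBelow_range _) i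
    linarith [abs_le_specNorm_sub_of_dominated hF hμ hν V R j (htop · j),
      abs_sub_abs_le_abs_sub (hR.eigenvalues i) (ν j), abs_sub_comm (ν j) (hR.eigenvalues i)]
  have hsinTheta : frob (Vpᵀ * V) ≤ 2 * √d * ε / lam := by
    have := davisKahan_sinTheta hA hV hR hVp hν (half_pos hlam).le hsep
    rw [Fintype.card_fin] at this
    rw [le_div_iff₀ hlam]
    linarith
  rw [frob_sub_projections hVhat hV (mul_transpose_add_mul_transpose_eq_one
    ((finCongr hdp.symm).trans finSumFinEquiv.symm) hF), two_rpow_three_halves]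
  calc √2 * frob (Vpᵀ * V) ≤ √2 * (2 * √d * ε / lam) := by gcongr
    _ = 2 * √2 * √d * ε / lam := by ring

/-- Davis–Kahan: if `P = V R Vᵀ` with `R` symmetric invertible, and `V̂`
consists of orthonormal eigenvectors of the symmetric matrix `A` for its `d`
largest-magnitude eigenvalues, then, provided `‖A − P‖ < |λ_min(R)|/2`,
`‖V̂V̂ᵀ − VVᵀ‖_F ≤ 2^{3/2} √d ‖A − P‖ / |λ_min(R)|`. -/
theorem stmt18 {n d p : ℕ} (hd : 0 < d) (hdp : d + p = n)
    (A P : Matrix (Fin n) (Fin n) ℝ) (hA : A.IsSymm)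
    (V : Matrix (Fin n) (Fin d) ℝ) (hV : Vᵀ * V = 1)
    (R : Matrix (Fin d) (Fin d) ℝ) (hR : R.IsHermitian) (hRunit : IsUnit R)
    (hP : P = V * R * Vᵀ)
    (Vhat : Matrix (Fin n) (Fin d) ℝ) (hVhat : Vhatᵀ * Vhat = 1)
    (μ : Fin d → ℝ) (hμ : A * Vhat = Vhat * Matrix.diagonal μ)
    (Vp : Matrix (Fin n) (Fin p) ℝ) (hVp : Vpᵀ * Vp = 1) (hperp : Vhatᵀ * Vp = 0)
    (ν : Fin p → ℝ) (hν : A * Vp = Vp * Matrix.diagonal ν)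
    (htop : ∀ k j, |ν j| ≤ |μ k|)
    (hgap : specNorm (A - P) < (⨅ i, |hR.eigenvalues i|) / 2) :
    frob (Vhat * Vhatᵀ - V * Vᵀ)
      ≤ 2 ^ ((3 : ℝ) / 2) * Real.sqrt d * specNorm (A - P) / ⨅ i, |hR.eigenvalues i| :=
  stmt18_general hdp A P hA V hV R hR hP Vhat hVhat μ hμ Vp hVp hperp ν hν htop hgap
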